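/- Let 𝒞 be a field on Ω. P is coherent in betting system 2A if and only if P is a countably additive probability on 𝒞. -/

import Mathlib

open Filter MeasureTheory ENNReal

variable {Ω : Type*}

noncomputable def ind (A : Set Ω) (ω : Ω) : ℝ := A.indicator (fun _ => (1:ℝ)) ω

def SeriesTendsTo (f : ℕ → ℝ) (x : ℝ) : Prop :=
  Tendsto (fun n => ∑ i ∈ Finset.range n, f i) atTop (nhds x)

def SeriesConv (f : ℕ → ℝ) : Prop := ∃ x, SeriesTendsTo f x

noncomputable def bterm (P : Set Ω → ℝ) (α : ℕ → ℝ) (A : ℕ → Set Ω) (ω : Ω) (i : ℕ) : ℝ :=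
  α i * (ind (A i) ω - P (A i))

def IsSetField (C : Set (Set Ω)) : Prop :=
  Set.univ ∈ C ∧ (∀ A ∈ C, Aᶜ ∈ C) ∧ ∀ A ∈ C, ∀ B ∈ C, A ∪ B ∈ C

def System1 (C : Set (Set Ω)) (α : ℕ → ℝ) (A : ℕ → Set Ω) : Prop :=
  (∀ i, A i ∈ C) ∧ {i | α i ≠ 0}.Finite

def System2 (C : Set (Set Ω)) (P : Set Ω → ℝ) (α : ℕ → ℝ) (A : ℕ → Set Ω) : Prop :=
  (∀ i, A i ∈ C) ∧ Summable (fun i => |α i| * P (A i)) ∧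
    ∀ ω, SeriesConv (bterm P α A ω)

def System2A (C : Set (Set Ω)) (P : Set Ω → ℝ) (α : ℕ → ℝ) (A : ℕ → Set Ω) : Prop :=
  (∀ i, A i ∈ C) ∧ ∀ ω, Summable (fun i => |bterm P α A ω i|)

def System2B (C : Set (Set Ω)) (P : Set Ω → ℝ) (α : ℕ → ℝ) (A : ℕ → Set Ω) : Prop :=
  (∀ i, A i ∈ C) ∧ ∃ M : ℝ, ∀ ω, ∀ n, ∑ i ∈ Finset.range n, |bterm P α A ω i| ≤ M

def System3 (C : Set (Set Ω)) (P : Set Ω → ℝ) (α : ℕ → ℝ) (A : ℕ → Set Ω) : Prop :=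
  (∀ i, A i ∈ C) ∧ SeriesConv (fun i => α i * P (A i)) ∧
    ∀ ω, SeriesConv (bterm P α A ω)

def IncoherentIn (P : Set Ω → ℝ) (S : (ℕ → ℝ) → (ℕ → Set Ω) → Prop) : Prop :=
  ∃ α A, S α A ∧ ∃ ε > (0:ℝ), ∀ ω, ∃ L, SeriesTendsTo (bterm P α A ω) L ∧ L ≤ -ε

def CoherentIn (P : Set Ω → ℝ) (S : (ℕ → ℝ) → (ℕ → Set Ω) → Prop) : Prop :=
  ¬ IncoherentIn P S

def IsNullSet (C : Set (Set Ω)) (P : Set Ω → ℝ) (Z : Set Ω) : Prop :=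
  ∀ δ : ℝ, 0 < δ → ∃ Zd ∈ C, Z ⊆ Zd ∧ P Zd < δ

def WeaklyIncoherentIn (C : Set (Set Ω)) (P : Set Ω → ℝ)
    (S : (ℕ → ℝ) → (ℕ → Set Ω) → Prop) : Prop :=
  ∃ α A, S α A ∧ ∃ ε > (0:ℝ), ∃ Z : Set Ω, IsNullSet C P Z ∧
    ∀ ω ∉ Z, ∃ L, SeriesTendsTo (bterm P α A ω) L ∧ L ≤ -ε

def StronglyCoherentIn (C : Set (Set Ω)) (P : Set Ω → ℝ)
    (S : (ℕ → ℝ) → (ℕ → Set Ω) → Prop) : Prop :=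
  ¬ WeaklyIncoherentIn C P S

def IrrationalIn (P : Set Ω → ℝ) (S : (ℕ → ℝ) → (ℕ → Set Ω) → Prop) : Prop :=
  ∃ α A, S α A ∧ ∀ ω, ∃ L, SeriesTendsTo (bterm P α A ω) L ∧ L < 0

def RationalIn (P : Set Ω → ℝ) (S : (ℕ → ℝ) → (ℕ → Set Ω) → Prop) : Prop :=
  ¬ IrrationalIn P S

def IsCAProb (C : Set (Set Ω)) (P : Set Ω → ℝ) : Prop :=
  P Set.univ = 1 ∧ (∀ A ∈ C, 0 ≤ P A) ∧
  (∀ A ∈ C, ∀ B ∈ C, Disjoint A B → P (A ∪ B) = P A + P B) ∧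
  (∀ A : ℕ → Set Ω, (∀ i, A i ∈ C) → Pairwise (Function.onFun Disjoint A) →
    (⋃ i, A i) ∈ C → HasSum (fun i => P (A i)) (P (⋃ i, A i)))

def IsPAtom (C : Set (Set Ω)) (P : Set Ω → ℝ) (F : Set Ω) : Prop :=
  F ∈ C ∧ 0 < P F ∧ ∀ B ∈ C, B ⊆ F → P B = P F ∨ P B = 0

def FiniteAtomicPartition (C : Set (Set Ω)) (P : Set Ω → ℝ) : Prop :=
  ∃ (n : ℕ) (F : Fin n → Set Ω), (∀ j, IsPAtom C P (F j)) ∧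
    Pairwise (Function.onFun Disjoint F) ∧ (⋃ j, F j) = Set.univ

def IsPFinite (C : Set (Set Ω)) (P : Set Ω → ℝ) : Prop :=
  ∀ B : ℕ → Set Ω, (∀ i, B i ∈ C) → (∀ i, B (i+1) ⊆ B i) →
    Tendsto (fun i => P (B i)) atTop (nhds 0) → ∃ j, P (B j) = 0

/-!
Necessity. If `P` violates normalisation, positivity or finite additivity, a finite bet whose
stakes are proportional to the discrepancy loses a fixed amount whatever happens. For a disjoint
sequence `Aᵢ` with union `U ∈ 𝒞`, the indicators of the `Aᵢ` sum to that of `U`; betting against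
`U` and on `A₀, …, Aₙ₋₁` shows `∑_{i<n} P Aᵢ ≤ P U`, and betting on `U` and against every `Aᵢ`
(a system-2A portfolio, since `∑ P Aᵢ < ∞`) shows `P U ≤ ∑ P Aᵢ`.

Sufficiency. By Carathéodory's theorem `P` extends to a probability measure `μ`. A single bet
`α (1_A - q)` with `q = μ A` has mean `0` and mean absolute value `2 |α| q (1 - q)`, which is at
most twice its absolute value at any fixed outcome `ω₀`. Hence a system-2A portfolio converges in `L¹`,
its balance has expectation `0`, and it cannot be `≤ -ε` everywhere.
-/

open Set

lemma ind_of_mem {A : Set Ω} {ω : Ω} (h : ω ∈ A) : ind A ω = 1 := indicator_of_mem h _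

lemma ind_of_notMem {A : Set Ω} {ω : Ω} (h : ω ∉ A) : ind A ω = 0 := indicator_of_notMem h _

lemma ind_univ (ω : Ω) : ind univ ω = 1 := ind_of_mem (mem_univ ω)

lemma ind_nonneg (A : Set Ω) (ω : Ω) : 0 ≤ ind A ω :=
  indicator_nonneg (fun _ _ => zero_le_one) ω

lemma ind_union_of_disjoint {A B : Set Ω} (h : Disjoint A B) (ω : Ω) :
    ind (A ∪ B) ω = ind A ω + ind B ω :=
  congrFun (indicator_union_of_disjoint h _) ω

lemma hasSum_ind_iUnion {A : ℕ → Set Ω} (hA : Pairwise (Function.onFun Disjoint A)) (ω : Ω) :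
    HasSum (fun i => ind (A i) ω) (ind (⋃ i, A i) ω) := by
  by_cases hω : ω ∈ ⋃ i, A i
  · obtain ⟨j, hj⟩ := mem_iUnion.1 hω
    rw [ind_of_mem hω, ← ind_of_mem hj]
    refine hasSum_single j fun i hij => ind_of_notMem fun hi => ?_
    exact Set.disjoint_left.1 (hA hij) hi hj
  · rw [ind_of_notMem hω]
    convert hasSum_zero with i
    exact ind_of_notMem fun hi => hω (mem_iUnion.2 ⟨i, hi⟩)

lemma abs_ind_sub_eq {A : Set Ω} {q : ℝ} (hq₀ : 0 ≤ q) (hq₁ : q ≤ 1) (ω : Ω) :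
    |ind A ω - q| = q + (1 - 2 * q) * ind A ω := by
  by_cases hω : ω ∈ A
  · rw [ind_of_mem hω, abs_of_nonneg (by linarith)]; ring
  · rw [ind_of_notMem hω, zero_sub, abs_neg, abs_of_nonneg hq₀]; ring

lemma mul_one_sub_le_abs_ind_sub {A : Set Ω} {q : ℝ} (hq₀ : 0 ≤ q) (hq₁ : q ≤ 1) (ω : Ω) :
    q * (1 - q) ≤ |ind A ω - q| := by
  rw [abs_ind_sub_eq hq₀ hq₁]
  by_cases hω : ω ∈ A
  · rw [ind_of_mem hω]; nlinarith
  · rw [ind_of_notMem hω]; nlinarith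

variable {C : Set (Set Ω)} {P : Set Ω → ℝ}

lemma IsSetField.isSetAlgebra (hC : IsSetField C) : IsSetAlgebra C where
  empty_mem := by simpa using hC.2.1 _ hC.1
  compl_mem _ hs := hC.2.1 _ hs
  union_mem _ _ hs ht := hC.2.2 _ hs _ ht

section Necessity

lemma incoherentIn_system2A_of_finite (huniv : univ ∈ C) {n : ℕ} (a : Fin n → ℝ)
    (U : Fin n → Set Ω) (hU : ∀ j, U j ∈ C) {ε : ℝ} (hε : 0 < ε)
    (hloss : ∀ ω, ∑ j, a j * (ind (U j) ω - P (U j)) ≤ -ε) :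
    IncoherentIn P (System2A C P) := by
  set α : ℕ → ℝ := fun i => if h : i < n then a ⟨i, h⟩ else 0
  set A : ℕ → Set Ω := fun i => if h : i < n then U ⟨i, h⟩ else univ
  have hzero : ∀ ω, ∀ i ∉ Finset.range n, bterm P α A ω i = 0 := fun ω i hi => by
    simp [bterm, α, show ¬i < n by simpa using hi]
  have hA : ∀ i, A i ∈ C := fun i => by
    simp only [A]; split_ifs; exacts [hU _, huniv]
  refine ⟨α, A, ⟨hA, fun ω => ?_⟩, ε, hε, fun ω => ?_⟩
  · exact summable_of_ne_finset_zero (s := Finset.range n) fun i hi => by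
      rw [hzero ω i hi, abs_zero]
  refine ⟨_, (hasSum_sum_of_ne_finset_zero (hzero ω)).tendsto_sum_nat, ?_⟩
  rw [← Fin.sum_univ_eq_sum_range]
  simpa [bterm, α, A] using hloss ω

variable (hC : IsSetField C) (h : CoherentIn P (System2A C P))
include hC h

lemma CoherentIn.apply_univ_eq_one : P univ = 1 := by
  by_contra hne
  have hd : 0 < (P univ - 1) ^ 2 := by positivity [sub_ne_zero.2 hne]
  refine h (incoherentIn_system2A_of_finite hC.1 ![P univ - 1] ![univ] (by simpa using hC.1) hd
    fun ω => ?_)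
  simp only [Fin.sum_univ_one, Matrix.cons_val_zero, ind_univ]
  nlinarith

lemma CoherentIn.apply_nonneg {A : Set Ω} (hA : A ∈ C) : 0 ≤ P A := by
  by_contra! hneg
  refine h (incoherentIn_system2A_of_finite hC.1 ![-1] ![A] (by simpa using hA) (neg_pos.2 hneg)
    fun ω => ?_)
  simp only [Fin.sum_univ_one, Matrix.cons_val_zero]
  linarith [ind_nonneg A ω]

lemma CoherentIn.apply_union {A B : Set Ω} (hA : A ∈ C) (hB : B ∈ C) (hAB : Disjoint A B) :
    P (A ∪ B) = P A + P B := by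
  by_contra hne
  set d := P (A ∪ B) - P A - P B
  have hd : 0 < d ^ 2 := by positivity [show d ≠ 0 by grind]
  refine h (incoherentIn_system2A_of_finite hC.1 ![d, -d, -d] ![A ∪ B, A, B]
    (by simp [Fin.forall_fin_succ, hA, hB, hC.2.2 _ hA _ hB]) hd fun ω => ?_)
  simp only [Fin.sum_univ_three, Matrix.cons_val_zero, Matrix.cons_val_one, Matrix.cons_val_two,
    Matrix.tail_cons, Matrix.head_cons, ind_union_of_disjoint hAB]
  nlinarith

section CountableAdditivity

variable {A : ℕ → Set Ω} (hA : ∀ i, A i ∈ C) (hd : Pairwise (Function.onFun Disjoint A))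
  (hU : (⋃ i, A i) ∈ C)
include hA hd hU

lemma CoherentIn.sum_range_le_iUnion (n : ℕ) : ∑ i ∈ Finset.range n, P (A i) ≤ P (⋃ i, A i) := by
  by_contra! hlt
  refine h (incoherentIn_system2A_of_finite hC.1 (Fin.cons (-1) fun _ => 1)
    (Fin.cons (⋃ i, A i) fun j : Fin n => A j) (Fin.cases hU fun j => hA j) (sub_pos.2 hlt)
    fun ω => ?_)
  have hind : ∑ i ∈ Finset.range n, ind (A i) ω ≤ ind (⋃ i, A i) ω :=
    sum_le_hasSum _ (fun i _ => ind_nonneg _ _) (hasSum_ind_iUnion hd ω)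
  simp only [Fin.sum_univ_succ, Fin.cons_zero, Fin.cons_succ, one_mul,
    Fin.sum_univ_eq_sum_range (fun i => ind (A i) ω - P (A i)), Finset.sum_sub_distrib]
  linarith

lemma CoherentIn.iUnion_le_of_hasSum {s : ℝ} (hs : HasSum (fun i => P (A i)) s) :
    P (⋃ i, A i) ≤ s := by
  by_contra! hlt
  set α : ℕ → ℝ := fun i => if i = 0 then 1 else -1
  set B : ℕ → Set Ω := fun i => if i = 0 then ⋃ j, A j else A (i - 1)
  have hshift : ∀ ω i, bterm P α B ω (i + 1) = P (A i) - ind (A i) ω := fun ω i => by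
    simp [bterm, α, B]
  refine h ⟨α, B, ⟨fun i => ?_, fun ω => ?_⟩, P (⋃ i, A i) - s, sub_pos.2 hlt, fun ω => ?_⟩
  · simp only [B]; split_ifs; exacts [hU, hA _]
  · refine (summable_nat_add_iff 1).1 (Summable.of_nonneg_of_le (fun _ => abs_nonneg _)
      (fun i => ?_) ((hasSum_ind_iUnion hd ω).summable.add hs.summable))
    rw [hshift, abs_le]
    constructor <;> linarith [ind_nonneg (A i) ω, h.apply_nonneg hC (hA i)]
  have htail : HasSum (fun i => bterm P α B ω (i + 1)) (s - ind (⋃ i, A i) ω) := by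
    simpa only [hshift] using hs.sub (hasSum_ind_iUnion hd ω)
  refine ⟨_, ((hasSum_nat_add_iff 1).1 htail).tendsto_sum_nat, le_of_eq ?_⟩
  simp [bterm, α, B]

lemma CoherentIn.hasSum_iUnion : HasSum (fun i => P (A i)) (P (⋃ i, A i)) := by
  have hle := h.sum_range_le_iUnion hC hA hd hU
  have hnn : ∀ i, 0 ≤ P (A i) := fun i => h.apply_nonneg hC (hA i)
  have hsum := summable_of_sum_range_le hnn hle
  have htsum := le_antisymm (Real.tsum_le_of_sum_range_le hnn hle)
    (h.iUnion_le_of_hasSum hC hA hd hU hsum.hasSum)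
  exact htsum ▸ hsum.hasSum

end CountableAdditivity

theorem CoherentIn.isCAProb : IsCAProb C P :=
  ⟨h.apply_univ_eq_one hC, fun _ hA => h.apply_nonneg hC hA,
    fun _ hA _ hB => h.apply_union hC hA hB, fun _ hA hd hU => h.hasSum_iUnion hC hA hd hU⟩

end Necessity

section Sufficiency

open MeasureTheory

theorem IsCAProb.exists_probabilityMeasure (hC : IsSetField C) (hP : IsCAProb C P) :
    ∃ (_ : MeasurableSpace Ω) (μ : Measure Ω), IsProbabilityMeasure μ ∧
      ∀ A ∈ C, MeasurableSet A ∧ μ.real A = P A := by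
  obtain ⟨huniv, hnonneg, hadd, hσadd⟩ := hP
  have hR := hC.isSetAlgebra.isSetRing
  have hempty : P ∅ = 0 := by
    simpa using hadd ∅ hR.empty_mem ∅ hR.empty_mem (disjoint_empty _)
  let m : AddContent ℝ≥0∞ C := hR.addContent_of_union (fun s => ENNReal.ofReal (P s))
    (by simp [hempty]) fun hs ht hst => by
      simp only [hadd _ hs _ ht hst, ENNReal.ofReal_add (hnonneg _ hs) (hnonneg _ ht)]
  have hσ : m.IsSigmaSubadditive :=
    isSigmaSubadditive_of_addContent_iUnion_eq_tsum hR fun f hf hU hd => by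
      have hsum := hσadd f hf hd hU
      change ENNReal.ofReal _ = ∑' i, ENNReal.ofReal _
      rw [← ENNReal.ofReal_tsum_of_nonneg (fun i => hnonneg _ (hf i)) hsum.summable, hsum.tsum_eq]
  let := MeasurableSpace.generateFrom C
  have hμ : ∀ A ∈ C, m.measure hR.isSetSemiring le_rfl hσ A = ENNReal.ofReal (P A) :=
    fun A hA => m.measure_eq _ rfl hσ hA
  refine ⟨_, m.measure _ le_rfl hσ, ⟨by rw [hμ _ hC.1, huniv, ENNReal.ofReal_one]⟩,
    fun A hA => ⟨MeasurableSpace.measurableSet_generateFrom hA, ?_⟩⟩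
  rw [measureReal_def, hμ A hA, ENNReal.toReal_ofReal (hnonneg A hA)]

theorem integrable_tsum {Ω E : Type*} [MeasurableSpace Ω] [NormedAddCommGroup E]
    {μ : Measure Ω} {F : ℕ → Ω → E} (hF : ∀ i, AEStronglyMeasurable (F i) μ)
    (hF' : ∑' i, ∫⁻ ω, ‖F i ω‖ₑ ∂μ ≠ ∞) (hsum : ∀ᵐ ω ∂μ, Summable fun i => F i ω) :
    Integrable (fun ω => ∑' i, F i ω) μ := by
  refine ⟨aestronglyMeasurable_of_tendsto_ae (atTop : Filter ℕ)
    (f := fun n ω => ∑ i ∈ Finset.range n, F i ω) (fun n => ?_) ?_, ?_⟩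
  · exact Finset.aestronglyMeasurable_fun_sum _ fun i _ => hF i
  · filter_upwards [hsum] with ω hω using hω.hasSum.tendsto_sum_nat
  · calc ∫⁻ ω, ‖∑' i, F i ω‖ₑ ∂μ ≤ ∫⁻ ω, ∑' i, ‖F i ω‖ₑ ∂μ :=
          lintegral_mono fun ω => enorm_tsum_le_tsum_enorm
      _ = ∑' i, ∫⁻ ω, ‖F i ω‖ₑ ∂μ := lintegral_tsum fun i => (hF i).enorm
      _ < ∞ := hF'.lt_top

variable [MeasurableSpace Ω] {μ : Measure Ω}

lemma integrable_ind [IsFiniteMeasure μ] {A : Set Ω} (hA : MeasurableSet A) :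
    Integrable (ind A) μ :=
  (integrable_const (1 : ℝ)).indicator hA

lemma integral_ind {A : Set Ω} (hA : MeasurableSet A) : ∫ ω, ind A ω ∂μ = μ.real A :=
  integral_indicator_one hA

variable [IsProbabilityMeasure μ]

lemma integral_abs_ind_sub {A : Set Ω} (hA : MeasurableSet A) :
    ∫ ω, |ind A ω - μ.real A| ∂μ = 2 * μ.real A * (1 - μ.real A) := by
  simp_rw [abs_ind_sub_eq measureReal_nonneg (measureReal_le_one (μ := μ))]
  rw [integral_add (integrable_const _) ((integrable_ind hA).const_mul _), integral_const,
    integral_const_mul, integral_ind hA]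
  simp only [probReal_univ, one_smul]
  ring

variable {α : ℕ → ℝ} {A : ℕ → Set Ω} (hA : ∀ i, MeasurableSet (A i))
include hA

lemma integrable_bterm (i : ℕ) : Integrable (fun ω => bterm μ.real α A ω i) μ :=
  ((integrable_ind (hA i)).sub (integrable_const _)).const_mul (α i)

lemma integral_bterm (i : ℕ) : ∫ ω, bterm μ.real α A ω i ∂μ = 0 := by
  simp only [bterm]
  rw [integral_const_mul, integral_sub (integrable_ind (hA i)) (integrable_const _),
    integral_ind (hA i)]
  simp

lemma integral_abs_bterm_le (ω₀ : Ω) (i : ℕ) :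
    ∫ ω, |bterm μ.real α A ω i| ∂μ ≤ 2 * |bterm μ.real α A ω₀ i| := by
  simp only [bterm, abs_mul]
  rw [integral_const_mul, integral_abs_ind_sub (hA i)]
  have := mul_one_sub_le_abs_ind_sub (A := A i) measureReal_nonneg
    (measureReal_le_one (μ := μ) (s := A i)) ω₀
  nlinarith [abs_nonneg (α i)]

variable (hsum : ∀ ω, Summable fun i => |bterm μ.real α A ω i|)
include hsum

lemma tsum_lintegral_enorm_bterm_ne_top : ∑' i, ∫⁻ ω, ‖bterm μ.real α A ω i‖ₑ ∂μ ≠ ∞ := by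
  obtain ⟨ω₀⟩ := nonempty_of_isProbabilityMeasure μ
  refine ne_top_of_le_ne_top (ENNReal.ofReal_ne_top (r := ∑' i, 2 * |bterm μ.real α A ω₀ i|)) ?_
  rw [ENNReal.ofReal_tsum_of_nonneg (fun i => by positivity) ((hsum ω₀).mul_left 2)]
  refine ENNReal.tsum_le_tsum fun i => ?_
  rw [← ofReal_integral_norm_eq_lintegral_enorm (integrable_bterm hA i)]
  exact ENNReal.ofReal_le_ofReal (integral_abs_bterm_le hA ω₀ i)

lemma integrable_tsum_bterm : Integrable (fun ω => ∑' i, bterm μ.real α A ω i) μ :=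
  integrable_tsum (fun i => (integrable_bterm hA i).1) (tsum_lintegral_enorm_bterm_ne_top hA hsum)
    (ae_of_all _ fun ω => (hsum ω).of_abs)

lemma integral_tsum_bterm : ∫ ω, ∑' i, bterm μ.real α A ω i ∂μ = 0 := by
  rw [integral_tsum (fun i => (integrable_bterm hA i).1)
    (tsum_lintegral_enorm_bterm_ne_top hA hsum)]
  simp [integral_bterm hA]

end Sufficiency

theorem IsCAProb.coherentIn (hC : IsSetField C) (hP : IsCAProb C P) :
    CoherentIn P (System2A C P) := by
  obtain ⟨_, μ, _, hμ⟩ := hP.exists_probabilityMeasure hC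
  rintro ⟨α, A, ⟨hAC, hsum⟩, ε, hε, hloss⟩
  have hA i := (hμ _ (hAC i)).1
  have hb : bterm P α A = bterm μ.real α A := by
    ext ω i; simp [bterm, (hμ _ (hAC i)).2]
  rw [hb] at hsum hloss
  have hle : ∀ ω, ∑' i, bterm μ.real α A ω i ≤ -ε := fun ω => by
    obtain ⟨L, hL, hLε⟩ := hloss ω
    rwa [tendsto_nhds_unique (hsum ω).of_abs.hasSum.tendsto_sum_nat hL]
  have hmean := integral_mono (integrable_tsum_bterm hA hsum) (integrable_const (-ε)) hle
  rw [integral_tsum_bterm hA hsum, integral_const, probReal_univ, one_smul] at hmean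
  linarith

theorem stmt14 (C : Set (Set Ω)) (P : Set Ω → ℝ) (hC : IsSetField C) :
    CoherentIn P (System2A C P) ↔ IsCAProb C P :=
  ⟨fun h => h.isCAProb hC, fun hP => hP.coherentIn hC⟩
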